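/- arXiv:2312.16621 — 7 statements merged into one kernel-verified Lean document; each statement's English description precedes it below -/
import Mathlib

section
/- Let $P_A$ be a real random variable uniformly distributed on $[P_{\min}, P_{\max}]$ with $0 \le P_{\min} < P_{\max}$, and let $\rho_1 > 0$, $\rho_2 \ge 0$, $\sigma^2 \ge 0$. Define the detection error probability $\xi(\Gamma) = \Pr(P_A \rho_1 + \sigma^2 > \Gamma) + \Pr(P_A \rho_1 + \rho_2 + \sigma^2 < \Gamma)$ for $\Gamma \in \mathbb{R}$. Then $\inf_{\Gamma \in \mathbb{R}} \xi(\Gamma) = \max\left(0,\; 1 - \frac{\rho_2}{(P_{\max} - P_{\min})\rho_1}\right)$, and this infimum is attained at $\Gamma^* = \sigma^2 + P_{\max}\rho_1$. -/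
/-!
Willie errs exactly when `P_A` lands outside a window of width `ρ2 / ρ1`: with
`t = (Γ - σ²) / ρ1`, one has `ξ(Γ) = 1 - Pr(P_A ∈ [t - ρ2 / ρ1, t])`. A uniform law on
`[Pmin, Pmax]` gives such a window mass at most `(ρ2 / ρ1) / (Pmax - Pmin)`, and the window
ending at `Pmax` (that is, `Γ = Γ*`) has mass `min 1 ((ρ2 / ρ1) / (Pmax - Pmin))`.
-/

open MeasureTheory Set

theorem measureReal_Ioi_add_measureReal_Iio {α : Type*} [LinearOrder α] [TopologicalSpace α]
    [OrderClosedTopology α] [MeasurableSpace α] [OpensMeasurableSpace α]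
    (μ : Measure α) [IsProbabilityMeasure μ] {a b : α} (hab : a ≤ b) :
    μ.real (Ioi b) + μ.real (Iio a) = 1 - μ.real (Icc a b) := by
  have h_Ici : μ.real (Icc a b) + μ.real (Ioi b) = μ.real (Ici a) := by
    rw [← measureReal_union ((Iic_disjoint_Ioi le_rfl).mono_left Icc_subset_Iic_self)
      measurableSet_Ioi, Icc_union_Ioi_eq_Ici hab]
  have h_univ : μ.real (Ici a) + μ.real (Iio a) = 1 := by
    rw [← compl_Ici, probReal_add_probReal_compl measurableSet_Ici]
  linarith

section UniformIcc

open ProbabilityTheory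

variable {l u d : ℝ}

theorem cond_volume_Icc_real (hlu : l ≤ u) {A : Set ℝ} (hA : MeasurableSet A) :
    volume[|Icc l u].real A = volume.real (Icc l u ∩ A) / (u - l) := by
  rw [measureReal_def, cond_apply' hA, ENNReal.toReal_mul, ENNReal.toReal_inv, ← measureReal_def,
    ← measureReal_def, Real.volume_real_Icc_of_le hlu, div_eq_inv_mul]

theorem cond_volume_Icc_real_Icc_sub_le (hlu : l ≤ u) (hd : 0 ≤ d) (t : ℝ) :
    volume[|Icc l u].real (Icc (t - d) t) ≤ d / (u - l) := by
  have hlen : volume.real (Icc (t - d) t) = d := by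
    rw [Real.volume_real_Icc_of_le (by linarith), sub_sub_cancel]
  rw [cond_volume_Icc_real hlu measurableSet_Icc]
  calc volume.real (Icc l u ∩ Icc (t - d) t) / (u - l)
      ≤ volume.real (Icc (t - d) t) / (u - l) := by
        gcongr
        · exact measure_Icc_lt_top.ne
        · exact inter_subset_right
    _ = d / (u - l) := by rw [hlen]

theorem cond_volume_Icc_real_Icc_sub (hlu : l < u) (hd : 0 ≤ d) :
    volume[|Icc l u].real (Icc (u - d) u) = min 1 (d / (u - l)) := by
  have hlen : volume.real (Icc l u ∩ Icc (u - d) u) = min (u - l) d := by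
    rw [Icc_inter_Icc, inf_idem, Real.volume_real_Icc_of_le (max_le hlu.le (by linarith)),
      ← min_sub_sub_left, sub_sub_cancel]
  rw [cond_volume_Icc_real hlu.le measurableSet_Icc, hlen, ← min_div_div_right (sub_pos.2 hlu).le,
    div_self (sub_pos.2 hlu).ne']

end UniformIcc

theorem falseAlarm_add_missDetection_eq {Ω : Type*} [MeasurableSpace Ω] (P : Measure Ω)
    [IsProbabilityMeasure P] {X : Ω → ℝ} (hX : AEMeasurable X P) {ρ1 ρ2 : ℝ} (hρ1 : 0 < ρ1)
    (hρ2 : 0 ≤ ρ2) (σ2 Γ : ℝ) :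
    P.real {ω | X ω * ρ1 + σ2 > Γ} + P.real {ω | X ω * ρ1 + ρ2 + σ2 < Γ} =
      1 - (P.map X).real (Icc ((Γ - σ2) / ρ1 - ρ2 / ρ1) ((Γ - σ2) / ρ1)) := by
  have h_falseAlarm : {ω | X ω * ρ1 + σ2 > Γ} = X ⁻¹' Ioi ((Γ - σ2) / ρ1) := by
    ext ω
    simp only [mem_ofPred_eq, mem_preimage, mem_Ioi, div_lt_iff₀ hρ1]
    constructor <;> intro h <;> linarith
  have h_miss : {ω | X ω * ρ1 + ρ2 + σ2 < Γ} = X ⁻¹' Iio ((Γ - σ2) / ρ1 - ρ2 / ρ1) := by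
    ext ω
    simp only [mem_ofPred_eq, mem_preimage, mem_Iio, ← sub_div, lt_div_iff₀ hρ1]
    constructor <;> intro h <;> linarith
  have := Measure.isProbabilityMeasure_map hX
  rw [h_falseAlarm, h_miss, ← map_measureReal_apply_of_aemeasurable hX measurableSet_Ioi,
    ← map_measureReal_apply_of_aemeasurable hX measurableSet_Iio]
  exact measureReal_Ioi_add_measureReal_Iio _ (sub_le_self _ (div_nonneg hρ2 hρ1.le))

theorem stmt_2_general
    {Ω : Type*} [MeasurableSpace Ω] (ℙ : Measure Ω) [IsProbabilityMeasure ℙ]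
    (Pmin Pmax ρ1 ρ2 σ2 : ℝ)
    (hPP : Pmin < Pmax) (hρ1 : 0 < ρ1) (hρ2 : 0 ≤ ρ2)
    (PA : Ω → ℝ)
    (hPAlaw : Measure.map PA ℙ =
      (ENNReal.ofReal (Pmax - Pmin))⁻¹ • volume.restrict (Set.Icc Pmin Pmax))
    (ξ : ℝ → ℝ)
    (hξ : ∀ Γ : ℝ, ξ Γ = (ℙ {ω | PA ω * ρ1 + σ2 > Γ}).toReal
        + (ℙ {ω | PA ω * ρ1 + ρ2 + σ2 < Γ}).toReal) :
    (⨅ Γ : ℝ, ξ Γ) = max 0 (1 - ρ2 / ((Pmax - Pmin) * ρ1)) ∧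
    ξ (σ2 + Pmax * ρ1) = max 0 (1 - ρ2 / ((Pmax - Pmin) * ρ1)) := by
  have hlaw : ℙ.map PA = ProbabilityTheory.cond volume (Icc Pmin Pmax) := by
    rw [hPAlaw, ProbabilityTheory.cond, Real.volume_Icc]
  have hPA : AEMeasurable PA ℙ :=
    pdf.IsUniform.aemeasurable (by simp [hPP]) measure_Icc_lt_top.ne hlaw
  have hwidth : 0 ≤ ρ2 / ρ1 := div_nonneg hρ2 hρ1.le
  have hwindow (Γ : ℝ) :
      ξ Γ = 1 - (ℙ.map PA).real (Icc ((Γ - σ2) / ρ1 - ρ2 / ρ1) ((Γ - σ2) / ρ1)) := by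
    rw [hξ]
    exact falseAlarm_add_missDetection_eq ℙ hPA hρ1 hρ2 σ2 Γ
  have hlower (Γ : ℝ) : max 0 (1 - ρ2 / ((Pmax - Pmin) * ρ1)) ≤ ξ Γ := by
    refine max_le (by rw [hξ]; positivity) ?_
    have hmass := cond_volume_Icc_real_Icc_sub_le hPP.le hwidth ((Γ - σ2) / ρ1)
    rw [div_div, mul_comm ρ1] at hmass
    rw [hwindow, hlaw]
    linarith
  have hoptimal : ξ (σ2 + Pmax * ρ1) = max 0 (1 - ρ2 / ((Pmax - Pmin) * ρ1)) := by
    have hΓ : (σ2 + Pmax * ρ1 - σ2) / ρ1 = Pmax := by field_simp; ring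
    rw [hwindow, hlaw, hΓ, cond_volume_Icc_real_Icc_sub hPP hwidth, ← max_sub_sub_left, sub_self,
      div_div, mul_comm ρ1]
  refine ⟨le_antisymm ?_ (le_ciInf hlower), hoptimal⟩
  exact hoptimal ▸ ciInf_le ⟨_, forall_mem_range.2 hlower⟩ _

/-- The detection error probability `ξ(Γ) = P_FA(Γ) + P_MD(Γ)` for Willie's
radiometer, with artificial-noise power `P_A` uniform on `[Pmin, Pmax]`, has
infimum `max (0, 1 - ρ2/((Pmax-Pmin)ρ1))` over all thresholds `Γ`, attained at
`Γ* = σ² + Pmax ρ1`. -/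
theorem stmt_2
    {Ω : Type*} [MeasurableSpace Ω] (ℙ : Measure Ω) [IsProbabilityMeasure ℙ]
    (Pmin Pmax ρ1 ρ2 σ2 : ℝ)
    (hPmin : 0 ≤ Pmin) (hPP : Pmin < Pmax) (hρ1 : 0 < ρ1) (hρ2 : 0 ≤ ρ2) (hσ2 : 0 ≤ σ2)
    (PA : Ω → ℝ) (hPAmeas : Measurable PA)
    (hPAlaw : Measure.map PA ℙ =
      (ENNReal.ofReal (Pmax - Pmin))⁻¹ • volume.restrict (Set.Icc Pmin Pmax))
    (ξ : ℝ → ℝ)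
    (hξ : ∀ Γ : ℝ, ξ Γ = (ℙ {ω | PA ω * ρ1 + σ2 > Γ}).toReal
        + (ℙ {ω | PA ω * ρ1 + ρ2 + σ2 < Γ}).toReal) :
    (⨅ Γ : ℝ, ξ Γ) = max 0 (1 - ρ2 / ((Pmax - Pmin) * ρ1)) ∧
    ξ (σ2 + Pmax * ρ1) = max 0 (1 - ρ2 / ((Pmax - Pmin) * ρ1)) :=
  stmt_2_general ℙ Pmin Pmax ρ1 ρ2 σ2 hPP hρ1 hρ2 PA hPAlaw ξ hξ
end

section
/- Let $N \ge 1$, let $A_1, A_2 \in \mathbb{C}^{N \times N}$ be Hermitian matrices, $b_1, b_2 \in \mathbb{C}^N$, and $c_1, c_2 \in \mathbb{R}$. Define $f_i(x) = x^H A_i x + 2\,\mathrm{Re}(b_i^H x) + c_i$ for $x \in \mathbb{C}^N$, $i = 1,2$. Suppose there exists $x_0 \in \mathbb{C}^N$ with $f_1(x_0) < 0$ (Slater condition). Then the implication "$f_1(x) \le 0 \Rightarrow f_2(x) \le 0$ for all $x \in \mathbb{C}^N$" holds if and only if there exists $\lambda \ge 0$ such that the $(N+1)\times(N+1)$ Hermitian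 block matrix $\lambda \begin{bmatrix} A_1 & b_1 \\ b_1^H & c_1 \end{bmatrix} - \begin{bmatrix} A_2 & b_2 \\ b_2^H & c_2 \end{bmatrix}$ is positive semidefinite. -/
/-
Homogenize with the bordered matrices `Bᵢ = [[Aᵢ, bᵢ], [bᵢᴴ, cᵢ]]`: `fᵢ x` is the real part of
`wᴴ Bᵢ w` at `w = (x, 1)`. Both sides are homogeneous of degree two, so the implication
`f₁ ≤ 0 → f₂ ≤ 0` gives `wᴴB₁w < 0 → wᴴB₂w ≤ 0` wherever the last coordinate of `w` is nonzero,
and by density everywhere. The joint range `{(wᴴB₁w, wᴴB₂w)}` is the range of `w ↦ wᴴ(B₁ + iB₂)w`,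
which is convex (Toeplitz–Hausdorff: rotating the phase of one vector makes the cross term a real
multiple of the difference of the two values). It contains `0`, meets `re < 0` by Slater, and
misses the open quadrant `{re < 0, im > 0}`, so a separating line through `0` gives
`im ≤ λ re` on it with `λ ≥ 0`, i.e. `λB₁ - B₂ ⪰ 0`.
-/

open Matrix ComplexOrder

open Set in
theorem exists_im_le_mul_re_of_convex {S : Set ℂ} (hS : Convex ℝ S) (h0 : 0 ∈ S)
    (hquadrant : ∀ z ∈ S, z.re < 0 → z.im ≤ 0) (hslater : ∃ z ∈ S, z.re < 0) :
    ∃ lam : ℝ, 0 ≤ lam ∧ ∀ z ∈ S, z.im ≤ lam * z.re := by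
  have hU : Convex ℝ (Iio 0 ×ℂ Ioi 0) :=
    (convex_halfSpace_re_lt 0).inter (convex_halfSpace_im_gt 0)
  have hdisj : Disjoint (Iio 0 ×ℂ Ioi 0) S := disjoint_right.2 fun z hz ⟨hre, him⟩ =>
    (hquadrant z hz hre).not_gt him
  obtain ⟨f, u, hfU, hfS⟩ :=
    geometric_hahn_banach_open hU (isOpen_Iio.reProdIm isOpen_Ioi) hS hdisj
  have hf (z : ℂ) : f z = z.re * f 1 + z.im * f Complex.I := by
    calc f z = f (z.re • 1 + z.im • Complex.I) := by congr 1; simp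
      _ = _ := by rw [map_add, map_smul, map_smul, smul_eq_mul, smul_eq_mul]
  -- `f ≤ u` on the closed quadrant, which contains `0`, `-1` and `I`.
  have hclosure : closure (Iio 0 ×ℂ Ioi 0) ⊆ {z | f z ≤ u} :=
    (closure_mono fun z hz => hfU z hz).trans
      (closure_lt_subset_le f.continuous continuous_const)
  rw [Complex.closure_reProdIm, closure_Iio, closure_Ioi] at hclosure
  have hle (z : ℂ) (hre : z.re ≤ 0) (him : 0 ≤ z.im) : f z ≤ u :=
    hclosure (Complex.mem_reProdIm.2 ⟨hre, him⟩)
  have hu : u = 0 := le_antisymm (by simpa using hfS 0 h0) (by simpa using hle 0 le_rfl le_rfl)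
  have hα : 0 ≤ f 1 := by simpa [hf (-1), hu] using hle (-1) (by simp) (by simp)
  have hβ : f Complex.I ≤ 0 := by simpa [hu] using hle Complex.I le_rfl zero_le_one
  have hβ' : f Complex.I < 0 := by
    refine hβ.lt_of_ne fun hβ0 => ?_
    obtain ⟨z, hz, hzre⟩ := hslater
    have hα0 : f 1 = 0 := by
      have := hfS z hz
      rw [hf, hβ0, hu] at this
      nlinarith
    have := hfU (-1 + Complex.I) (Complex.mem_reProdIm.2 ⟨by simp, by simp⟩)
    rw [hf, hα0, hβ0, hu] at this
    simp at this
  refine ⟨f 1 / -f Complex.I, div_nonneg hα (by linarith), fun z hz => ?_⟩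
  have := hfS z hz
  rw [hf, hu] at this
  rw [div_mul_eq_mul_div, le_div_iff₀ (by linarith)]
  linarith

theorem exists_star_mul_self_eq_one_im_mul_add_star_mul_eq_zero (u v : ℂ) :
    ∃ ζ : ℂ, star ζ * ζ = 1 ∧ (ζ * u + star ζ * v).im = 0 := by
  set g : ℝ → ℝ := fun θ =>
    (Complex.exp (θ * Complex.I) * u + star (Complex.exp (θ * Complex.I)) * v).im
  have hg : Continuous g := by fun_prop
  have hgπ : g Real.pi = -g 0 := by simp [g]; ring
  obtain ⟨θ, -, hθ⟩ : ∃ θ ∈ Set.uIcc 0 Real.pi, g θ = 0 :=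
    intermediate_value_uIcc hg.continuousOn <| by
      rw [hgπ, Set.mem_uIcc]; rcases le_total (g 0) 0 with h | h <;> [left; right] <;>
        constructor <;> linarith
  refine ⟨Complex.exp (θ * Complex.I), ?_, hθ⟩
  rw [Complex.star_def, Complex.conj_mul', Complex.norm_exp_ofReal_mul_I]
  simp

theorem exists_sin_sq_add_mul_sin_mul_cos_eq (c : ℝ) {b : ℝ} (hb0 : 0 ≤ b) (hb1 : b ≤ 1) :
    ∃ s : ℝ, Real.sin s ^ 2 + c * (Real.sin s * Real.cos s) = b := by
  obtain ⟨s, -, hs⟩ := intermediate_value_Icc (by positivity : (0 : ℝ) ≤ Real.pi / 2)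
    (f := fun s => Real.sin s ^ 2 + c * (Real.sin s * Real.cos s)) (by fun_prop)
    (by simpa using And.intro hb0 hb1)
  exact ⟨s, hs⟩

section QuadraticForm

variable {ι : Type*} [Fintype ι]

theorem star_dotProduct_mulVec_smul_add_smul (M : Matrix ι ι ℂ) (α β : ℂ) (x y : ι → ℂ) :
    star (α • x + β • y) ⬝ᵥ M *ᵥ (α • x + β • y) =
      star α * α * (star x ⬝ᵥ M *ᵥ x) + star β * β * (star y ⬝ᵥ M *ᵥ y) +
        (star α * β * (star x ⬝ᵥ M *ᵥ y) + star β * α * (star y ⬝ᵥ M *ᵥ x)) := by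
  simp only [star_add, star_smul, mulVec_add, mulVec_smul, dotProduct_add, add_dotProduct,
    smul_dotProduct, dotProduct_smul, smul_eq_mul]
  ring

theorem re_star_smul_dotProduct_mulVec_smul (M : Matrix ι ι ℂ) (τ : ℂ) (w : ι → ℂ) :
    (star (τ • w) ⬝ᵥ M *ᵥ (τ • w)).re = Complex.normSq τ * (star w ⬝ᵥ M *ᵥ w).re := by
  rw [star_smul, mulVec_smul, smul_dotProduct, dotProduct_smul, smul_smul, smul_eq_mul,
    Complex.star_def, ← Complex.normSq_eq_conj_mul_self, Complex.re_ofReal_mul]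

theorem Matrix.IsHermitian.ofReal_re_star_dotProduct_mulVec {M : Matrix ι ι ℂ}
    (hM : M.IsHermitian) (w : ι → ℂ) :
    ((star w ⬝ᵥ M *ᵥ w).re : ℂ) = star w ⬝ᵥ M *ᵥ w :=
  Complex.ext rfl (by simpa using (hM.im_star_dotProduct_mulVec_self w).symm)

theorem re_star_dotProduct_smul_sub_mulVec (r : ℝ) (M₁ M₂ : Matrix ι ι ℂ) (w : ι → ℂ) :
    (star w ⬝ᵥ (r • M₁ - M₂) *ᵥ w).re = r * (star w ⬝ᵥ M₁ *ᵥ w).re - (star w ⬝ᵥ M₂ *ᵥ w).re := by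
  simp [sub_mulVec, smul_mulVec]

theorem continuous_re_star_dotProduct_mulVec (M : Matrix ι ι ℂ) :
    Continuous fun w : ι → ℂ => (star w ⬝ᵥ M *ᵥ w).re := by
  fun_prop

theorem convex_range_star_dotProduct_mulVec (M : Matrix ι ι ℂ) :
    Convex ℝ (Set.range fun w : ι → ℂ => star w ⬝ᵥ M *ᵥ w) := by
  rintro _ ⟨x, rfl⟩ _ ⟨y, rfl⟩ a b ha hb hab
  set p := star x ⬝ᵥ M *ᵥ x
  set q := star y ⬝ᵥ M *ᵥ y
  rcases eq_or_ne p q with hpq | hpq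
  · exact ⟨x, by simp only [p, q] at hpq ⊢; rw [← hpq, ← add_smul, hab, one_smul]⟩
  have hqp : q - p ≠ 0 := sub_ne_zero.2 hpq.symm
  set u := star x ⬝ᵥ M *ᵥ y
  set v := star y ⬝ᵥ M *ᵥ x
  obtain ⟨ζ, hζ, hζim⟩ :=
    exists_star_mul_self_eq_one_im_mul_add_star_mul_eq_zero (u / (q - p)) (v / (q - p))
  set c := (ζ * (u / (q - p)) + star ζ * (v / (q - p))).re
  have hc : ζ * u + star ζ * v = c * (q - p) := by
    have : ζ * (u / (q - p)) + star ζ * (v / (q - p)) = c :=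
      Complex.ext (by simp [c]) (by simpa using hζim)
    rw [← this]
    field_simp
  obtain ⟨s, hs⟩ := exists_sin_sq_add_mul_sin_mul_cos_eq c hb (by linarith)
  -- The value at this vector is `p + (sin² s + c sin s cos s) (q - p) = a p + b q`.
  refine ⟨(Real.cos s : ℂ) • x + (Real.sin s * ζ : ℂ) • y, ?_⟩
  have hpyth : (Real.cos s : ℂ) ^ 2 + (Real.sin s : ℂ) ^ 2 = 1 := by
    exact_mod_cast Real.cos_sq_add_sin_sq s
  have hs' : (Real.sin s : ℂ) ^ 2 + c * (Real.sin s * Real.cos s) = b := by exact_mod_cast hs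
  have hab' : (a : ℂ) + b = 1 := by exact_mod_cast hab
  have hstar_real (r : ℝ) : star (r : ℂ) = r := Complex.conj_ofReal r
  simp only [star_dotProduct_mulVec_smul_add_smul, star_mul', hstar_real, Complex.real_smul]
  linear_combination (Real.sin s : ℂ) ^ 2 * q * hζ + Real.cos s * Real.sin s * hc +
    (q - p) * hs' + p * hpyth - p * hab'

theorem s_lemma_homogeneous {M₁ M₂ : Matrix ι ι ℂ} (h₁ : M₁.IsHermitian) (h₂ : M₂.IsHermitian)
    (hslater : ∃ w, (star w ⬝ᵥ M₁ *ᵥ w).re < 0)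
    (himp : ∀ w, (star w ⬝ᵥ M₁ *ᵥ w).re < 0 → (star w ⬝ᵥ M₂ *ᵥ w).re ≤ 0) :
    ∃ lam : ℝ, 0 ≤ lam ∧ (lam • M₁ - M₂).PosSemidef := by
  have hjoint (w : ι → ℂ) : star w ⬝ᵥ (M₁ + Complex.I • M₂) *ᵥ w =
      ⟨(star w ⬝ᵥ M₁ *ᵥ w).re, (star w ⬝ᵥ M₂ *ᵥ w).re⟩ := by
    rw [add_mulVec, smul_mulVec, dotProduct_add, dotProduct_smul, smul_eq_mul,
      ← h₁.ofReal_re_star_dotProduct_mulVec, ← h₂.ofReal_re_star_dotProduct_mulVec]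
    apply Complex.ext <;> simp
  obtain ⟨lam, hlam, hle⟩ := exists_im_le_mul_re_of_convex
    (convex_range_star_dotProduct_mulVec (M₁ + Complex.I • M₂)) ⟨0, by simp⟩
    (by rintro _ ⟨w, rfl⟩; simpa only [hjoint] using himp w)
    (by obtain ⟨w, hw⟩ := hslater; exact ⟨_, ⟨w, rfl⟩, by simpa only [hjoint]⟩)
  refine ⟨lam, hlam, .of_dotProduct_mulVec_nonneg
    ((h₁.smul (IsSelfAdjoint.all _)).sub h₂) fun w => ?_⟩
  rw [← ((h₁.smul (IsSelfAdjoint.all lam)).sub h₂).ofReal_re_star_dotProduct_mulVec,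
    Complex.zero_le_real, re_star_dotProduct_smul_sub_mulVec]
  simpa only [hjoint, sub_nonneg] using hle _ ⟨w, rfl⟩

end QuadraticForm

theorem dense_setOf_apply_ne_zero {ι : Type*} (i : ι) : Dense {w : ι → ℂ | w i ≠ 0} :=
  (dense_compl_singleton 0).preimage (isOpenMap_eval i)

section Bordered

variable {n : Type*}

def borderedMatrix (A : Matrix n n ℂ) (b : n → ℂ) (c : ℝ) : Matrix (n ⊕ Fin 1) (n ⊕ Fin 1) ℂ :=
  fromBlocks A (of fun i (_ : Fin 1) => b i) (of fun (_ : Fin 1) j => star (b j))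
    (of fun (_ : Fin 1) (_ : Fin 1) => (c : ℂ))

theorem borderedMatrix_isHermitian {A : Matrix n n ℂ} (hA : A.IsHermitian) (b : n → ℂ) (c : ℝ) :
    (borderedMatrix A b c).IsHermitian := by
  refine IsHermitian.fromBlocks hA ?_ ?_
  · ext i j; simp
  · ext i j; simp

theorem exists_eq_smul_sumElim_one {w : n ⊕ Fin 1 → ℂ} (hw : w (Sum.inr 0) ≠ 0) :
    ∃ (τ : ℂ) (y : n → ℂ), w = τ • Sum.elim y 1 := by
  refine ⟨w (Sum.inr 0), (w (Sum.inr 0))⁻¹ • (w ∘ Sum.inl), funext ?_⟩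
  rintro (i | j)
  · simp [hw]
  · simp [Subsingleton.elim j 0]

variable [Fintype n]

def quadraticFun (A : Matrix n n ℂ) (b : n → ℂ) (c : ℝ) (x : n → ℂ) : ℝ :=
  (star x ⬝ᵥ A *ᵥ x).re + 2 * (star b ⬝ᵥ x).re + c

theorem re_star_dotProduct_borderedMatrix_mulVec_sumElim_one (A : Matrix n n ℂ) (b : n → ℂ)
    (c : ℝ) (x : n → ℂ) :
    (star (Sum.elim x 1) ⬝ᵥ borderedMatrix A b c *ᵥ Sum.elim x 1).re = quadraticFun A b c x := by
  have hb : (of fun i (_ : Fin 1) => b i) *ᵥ 1 = b := by ext; simp [mulVec, dotProduct]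
  have hbx : (of fun (_ : Fin 1) j => star (b j)) *ᵥ x = fun _ => star b ⬝ᵥ x := by
    ext; simp [mulVec, dotProduct]
  have hc : (of fun (_ : Fin 1) (_ : Fin 1) => (c : ℂ)) *ᵥ 1 = fun _ => (c : ℂ) := by
    ext; simp [mulVec, dotProduct]
  have hxb : (star x ⬝ᵥ b).re = (star b ⬝ᵥ x).re := by
    rw [← Complex.conj_re, ← Complex.star_def, star_dotProduct, star_star]
  rw [borderedMatrix, fromBlocks_mulVec, Function.star_sumElim, sumElim_dotProduct_sumElim,
    Sum.elim_comp_inl, Sum.elim_comp_inr, hb, hbx, hc]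
  simp [quadraticFun, dotProduct_add, hxb, one_dotProduct]
  ring

theorem borderedMatrix_imp_of_quadraticFun_imp {A₁ A₂ : Matrix n n ℂ} {b₁ b₂ : n → ℂ} {c₁ c₂ : ℝ}
    (himp : ∀ x, quadraticFun A₁ b₁ c₁ x ≤ 0 → quadraticFun A₂ b₂ c₂ x ≤ 0)
    (w : n ⊕ Fin 1 → ℂ) (hw : (star w ⬝ᵥ borderedMatrix A₁ b₁ c₁ *ᵥ w).re < 0) :
    (star w ⬝ᵥ borderedMatrix A₂ b₂ c₂ *ᵥ w).re ≤ 0 := by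
  suffices {w | (star w ⬝ᵥ borderedMatrix A₁ b₁ c₁ *ᵥ w).re < 0} ⊆
      {w | (star w ⬝ᵥ borderedMatrix A₂ b₂ c₂ *ᵥ w).re ≤ 0} from this hw
  refine ((dense_setOf_apply_ne_zero (Sum.inr 0)).open_subset_closure_inter
    (isOpen_lt (continuous_re_star_dotProduct_mulVec _) continuous_const)).trans
    (closure_minimal ?_ (isClosed_le (continuous_re_star_dotProduct_mulVec _) continuous_const))
  rintro w ⟨hw₁, hw₀⟩
  obtain ⟨τ, y, rfl⟩ := exists_eq_smul_sumElim_one hw₀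
  simp only [Set.mem_ofPred_eq, re_star_smul_dotProduct_mulVec_smul,
    re_star_dotProduct_borderedMatrix_mulVec_sumElim_one] at hw₁ ⊢
  have hy : quadraticFun A₁ b₁ c₁ y < 0 := neg_of_mul_neg_right hw₁ (Complex.normSq_nonneg τ)
  exact mul_nonpos_of_nonneg_of_nonpos (Complex.normSq_nonneg τ) (himp y hy.le)

theorem quadraticFun_le_mul_of_posSemidef {A₁ A₂ : Matrix n n ℂ} {b₁ b₂ : n → ℂ} {c₁ c₂ : ℝ}
    {lam : ℝ} (h : (lam • borderedMatrix A₁ b₁ c₁ - borderedMatrix A₂ b₂ c₂).PosSemidef)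
    (x : n → ℂ) : quadraticFun A₂ b₂ c₂ x ≤ lam * quadraticFun A₁ b₁ c₁ x := by
  have := h.re_dotProduct_nonneg (Sum.elim x 1)
  rw [RCLike.re_to_complex, re_star_dotProduct_smul_sub_mulVec,
    re_star_dotProduct_borderedMatrix_mulVec_sumElim_one,
    re_star_dotProduct_borderedMatrix_mulVec_sumElim_one] at this
  linarith

end Bordered

theorem stmt_4_general
    (N : ℕ)
    (A1 A2 : Matrix (Fin N) (Fin N) ℂ) (hA1 : A1.IsHermitian) (hA2 : A2.IsHermitian)
    (b1 b2 : Fin N → ℂ) (c1 c2 : ℝ)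
    (f1 f2 : (Fin N → ℂ) → ℝ)
    (hf1 : ∀ x : Fin N → ℂ,
      f1 x = (star x ⬝ᵥ A1 *ᵥ x).re + 2 * (star b1 ⬝ᵥ x).re + c1)
    (hf2 : ∀ x : Fin N → ℂ,
      f2 x = (star x ⬝ᵥ A2 *ᵥ x).re + 2 * (star b2 ⬝ᵥ x).re + c2)
    (slater : ∃ x0 : Fin N → ℂ, f1 x0 < 0) :
    (∀ x : Fin N → ℂ, f1 x ≤ 0 → f2 x ≤ 0) ↔
      ∃ lam : ℝ, 0 ≤ lam ∧
        (lam • Matrix.fromBlocks A1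
            (Matrix.of fun i (_ : Fin 1) => b1 i)
            (Matrix.of fun (_ : Fin 1) j => star (b1 j))
            (Matrix.of fun (_ : Fin 1) (_ : Fin 1) => (c1 : ℂ))
          - Matrix.fromBlocks A2
            (Matrix.of fun i (_ : Fin 1) => b2 i)
            (Matrix.of fun (_ : Fin 1) j => star (b2 j))
            (Matrix.of fun (_ : Fin 1) (_ : Fin 1) => (c2 : ℂ))).PosSemidef := by
  obtain rfl : f1 = quadraticFun A1 b1 c1 := funext hf1
  obtain rfl : f2 = quadraticFun A2 b2 c2 := funext hf2
  change _ ↔ ∃ lam : ℝ, 0 ≤ lam ∧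
    (lam • borderedMatrix A1 b1 c1 - borderedMatrix A2 b2 c2).PosSemidef
  refine ⟨fun himp => ?_, fun ⟨lam, hlam, hpsd⟩ x hx => ?_⟩
  · obtain ⟨x0, hx0⟩ := slater
    refine s_lemma_homogeneous (borderedMatrix_isHermitian hA1 b1 c1)
      (borderedMatrix_isHermitian hA2 b2 c2) ⟨Sum.elim x0 1, ?_⟩
      (borderedMatrix_imp_of_quadraticFun_imp himp)
    rwa [re_star_dotProduct_borderedMatrix_mulVec_sumElim_one]
  · nlinarith [quadraticFun_le_mul_of_posSemidef hpsd x]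

/-- Complex S-procedure (S-lemma): for Hermitian quadratic functions
`fᵢ(x) = xᴴ Aᵢ x + 2 Re(bᵢᴴ x) + cᵢ` on `ℂ^N` satisfying the Slater
condition, the implication `f₁(x) ≤ 0 → f₂(x) ≤ 0` holds for all `x` iff
there is `λ ≥ 0` making the block matrix
`λ [[A₁, b₁],[b₁ᴴ, c₁]] - [[A₂, b₂],[b₂ᴴ, c₂]]` positive semidefinite. -/
theorem stmt_4
    (N : ℕ) (hN : 1 ≤ N)
    (A1 A2 : Matrix (Fin N) (Fin N) ℂ) (hA1 : A1.IsHermitian) (hA2 : A2.IsHermitian)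
    (b1 b2 : Fin N → ℂ) (c1 c2 : ℝ)
    (f1 f2 : (Fin N → ℂ) → ℝ)
    (hf1 : ∀ x : Fin N → ℂ,
      f1 x = (star x ⬝ᵥ A1 *ᵥ x).re + 2 * (star b1 ⬝ᵥ x).re + c1)
    (hf2 : ∀ x : Fin N → ℂ,
      f2 x = (star x ⬝ᵥ A2 *ᵥ x).re + 2 * (star b2 ⬝ᵥ x).re + c2)
    (slater : ∃ x0 : Fin N → ℂ, f1 x0 < 0) :
    (∀ x : Fin N → ℂ, f1 x ≤ 0 → f2 x ≤ 0) ↔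
      ∃ lam : ℝ, 0 ≤ lam ∧
        (lam • Matrix.fromBlocks A1
            (Matrix.of fun i (_ : Fin 1) => b1 i)
            (Matrix.of fun (_ : Fin 1) j => star (b1 j))
            (Matrix.of fun (_ : Fin 1) (_ : Fin 1) => (c1 : ℂ))
          - Matrix.fromBlocks A2
            (Matrix.of fun i (_ : Fin 1) => b2 i)
            (Matrix.of fun (_ : Fin 1) j => star (b2 j))
            (Matrix.of fun (_ : Fin 1) (_ : Fin 1) => (c2 : ℂ))).PosSemidef :=
  stmt_4_general N A1 A2 hA1 hA2 b1 b2 c1 c2 f1 f2 hf1 hf2 slater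
end

section
/- Let $P_A$ be uniformly distributed on $[P_{\min}, P_{\max}]$ with $0 \le P_{\min} < P_{\max}$, let $T$ be an independent exponential random variable with mean $\lambda > 0$ (density $\frac{1}{\lambda}e^{-t/\lambda}$ on $[0,\infty)$), and let $t_A > 0$, $\sigma^2 \ge 0$ be constants. Then for every threshold $\Gamma \ge \sigma^2 + P_{\max} t_A$, the miss detection probability satisfies $\Pr(P_A t_A + T + \sigma^2 < \Gamma) = 1 - \frac{\lambda\, e^{-(\Gamma - \sigma^2)/\lambda}}{(P_{\max} - P_{\min}) t_A}\left(e^{P_{\max} t_A / \lambda} - e^{P_{\min} t_A / \lambda}\right)$. -/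
open MeasureTheory Set

/-!
Conditioning on `P_A = p`, independence and Fubini reduce the probability to the average over
`p ∈ [Pmin, Pmax]` of the exponential CDF at `Γ - σ² - p t_A`; the threshold condition makes this
argument nonnegative for every `p`, so the CDF is `1 - exp (-(Γ - σ² - p t_A) / λ)` throughout and
the average is an elementary exponential integral.
-/

lemma setLIntegral_Icc_ofReal_eq_intervalIntegral {f : ℝ → ℝ} {a b : ℝ} (hab : a ≤ b)
    (hf : ContinuousOn f (Icc a b)) (hf0 : ∀ x ∈ Icc a b, 0 ≤ f x) :
    ∫⁻ x in Icc a b, ENNReal.ofReal (f x) = ENNReal.ofReal (∫ x in a..b, f x) := by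
  rw [intervalIntegral.integral_of_le hab, ← integral_Icc_eq_integral_Ioc,
    ofReal_integral_eq_lintegral_ofReal hf.integrableOn_Icc
      ((ae_restrict_iff' measurableSet_Icc).2 (ae_of_all _ hf0))]

lemma integral_exp_mul_add {α : ℝ} (hα : α ≠ 0) (β a b : ℝ) :
    ∫ x in a..b, Real.exp (α * x + β) = (Real.exp (α * b + β) - Real.exp (α * a + β)) / α := by
  rw [intervalIntegral.integral_comp_mul_add (fun x => Real.exp x) hα, integral_exp, smul_eq_mul,
    inv_mul_eq_div]

namespace ProbabilityTheory

lemma withDensity_ofReal_exponential_density_eq_expMeasure (l : ℝ) :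
    volume.withDensity
        (fun t => ENNReal.ofReal (if 0 ≤ t then (1 / l) * Real.exp (-t / l) else 0)) =
      expMeasure l⁻¹ := by
  change _ = volume.withDensity (exponentialPDF l⁻¹)
  congr 1
  funext t
  rw [exponentialPDF_eq, one_div, neg_div, div_eq_inv_mul]

lemma expMeasure_Iio {r : ℝ} (hr : 0 < r) {s : ℝ} (hs : 0 ≤ s) :
    expMeasure r (Iio s) = ENNReal.ofReal (1 - Real.exp (-(r * s))) := by
  have := isProbabilityMeasure_expMeasure hr
  have hatom : expMeasure r {s} = 0 :=
    withDensity_absolutelyContinuous _ _ (measure_singleton s)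
  rw [← Iic_sdiff_right, measure_sdiff_null hatom, ← ofReal_cdf, cdf_expMeasure_eq hr, if_pos hs]

lemma IndepFun.measure_lt_comp_eq_lintegral {Ω α : Type*} [MeasurableSpace Ω]
    [MeasurableSpace α] {μ : Measure Ω} [IsFiniteMeasure μ] {X : Ω → α} {Y : Ω → ℝ}
    (hX : Measurable X) (hY : Measurable Y) (hXY : IndepFun X Y μ) {g : α → ℝ}
    (hg : Measurable g) :
    μ {ω | Y ω < g (X ω)} = ∫⁻ x, μ.map Y (Iio (g x)) ∂(μ.map X) := by
  have hS : MeasurableSet {p : α × ℝ | p.2 < g p.1} :=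
    measurableSet_lt measurable_snd (hg.comp measurable_fst)
  have hjoint : μ.map (fun ω => (X ω, Y ω)) = (μ.map X).prod (μ.map Y) :=
    (indepFun_iff_map_prod_eq_prod_map_map hX.aemeasurable hY.aemeasurable).mp hXY
  calc μ {ω | Y ω < g (X ω)} = μ.map (fun ω => (X ω, Y ω)) {p | p.2 < g p.1} := by
        rw [Measure.map_apply (hX.prodMk hY) hS]; rfl
    _ = _ := by rw [hjoint, Measure.prod_apply hS]; rfl

end ProbabilityTheory

theorem stmt_6_general
    {Ω : Type*} [MeasurableSpace Ω] (ℙ : Measure Ω) [IsProbabilityMeasure ℙ]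
    (Pmin Pmax l tA σ2 Γ : ℝ)
    (hPP : Pmin < Pmax) (hl : 0 < l) (htA : 0 < tA)
    (PA T : Ω → ℝ) (hPAmeas : Measurable PA) (hTmeas : Measurable T)
    (hPAlaw : Measure.map PA ℙ =
      (ENNReal.ofReal (Pmax - Pmin))⁻¹ • volume.restrict (Set.Icc Pmin Pmax))
    (hTlaw : Measure.map T ℙ =
      volume.withDensity
        (fun t => ENNReal.ofReal (if 0 ≤ t then (1 / l) * Real.exp (-t / l) else 0)))
    (hindep : ProbabilityTheory.IndepFun PA T ℙ)
    (hΓ : σ2 + Pmax * tA ≤ Γ) :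
    (ℙ {ω | PA ω * tA + T ω + σ2 < Γ}).toReal
      = 1 - (l * Real.exp (-(Γ - σ2) / l)) / ((Pmax - Pmin) * tA)
          * (Real.exp (Pmax * tA / l) - Real.exp (Pmin * tA / l)) := by
  set g : ℝ → ℝ := fun p => 1 - Real.exp (tA / l * p + -(Γ - σ2) / l)
  have hg0 : ∀ p ∈ Icc Pmin Pmax, 0 ≤ g p := by
    intro p hp
    have : p * tA ≤ Γ - σ2 := by nlinarith [hp.2]
    have hexp : tA / l * p + -(Γ - σ2) / l = (p * tA - (Γ - σ2)) / l := by ring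
    simp only [g, sub_nonneg, Real.exp_le_one_iff, hexp]
    exact div_nonpos_of_nonpos_of_nonneg (by linarith) hl.le
  have hslice : ∀ p ∈ Icc Pmin Pmax,
      ProbabilityTheory.expMeasure l⁻¹ (Iio (Γ - σ2 - p * tA)) = ENNReal.ofReal (g p) := by
    intro p hp
    rw [ProbabilityTheory.expMeasure_Iio (inv_pos.2 hl) (by nlinarith [hp.2])]
    congr 3
    field_simp
    ring
  have hevent : {ω | PA ω * tA + T ω + σ2 < Γ} = {ω | T ω < Γ - σ2 - PA ω * tA} := by
    ext ω
    simp only [mem_ofPred_eq]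
    constructor <;> intro <;> linarith
  have hint : ∫ p in Pmin..Pmax, g p = (Pmax - Pmin) - (Real.exp (tA / l * Pmax + -(Γ - σ2) / l)
      - Real.exp (tA / l * Pmin + -(Γ - σ2) / l)) / (tA / l) := by
    rw [intervalIntegral.integral_sub intervalIntegrable_const
      (Continuous.intervalIntegrable (by fun_prop) _ _), integral_one,
      integral_exp_mul_add (by positivity)]
  have hreduce : ℙ {ω | PA ω * tA + T ω + σ2 < Γ}
      = (ENNReal.ofReal (Pmax - Pmin))⁻¹ * ENNReal.ofReal (∫ p in Pmin..Pmax, g p) := by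
    rw [hevent, hindep.measure_lt_comp_eq_lintegral hPAmeas hTmeas
        (g := fun p => Γ - σ2 - p * tA) (by fun_prop),
      hPAlaw, hTlaw, ProbabilityTheory.withDensity_ofReal_exponential_density_eq_expMeasure,
      lintegral_smul_measure, setLIntegral_congr_fun measurableSet_Icc hslice,
      setLIntegral_Icc_ofReal_eq_intervalIntegral hPP.le (by fun_prop) hg0, smul_eq_mul]
  rw [hreduce, ENNReal.toReal_mul, ENNReal.toReal_inv, ENNReal.toReal_ofReal (sub_nonneg.2 hPP.le),
    ENNReal.toReal_ofReal (intervalIntegral.integral_nonneg hPP.le hg0), hint, Real.exp_add,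
    Real.exp_add]
  have hlen : Pmax - Pmin ≠ 0 := sub_ne_zero.2 hPP.ne'
  field_simp

/-- Statistical-WCSI miss detection probability: with `P_A` uniform on
`[Pmin, Pmax]` and `T` an independent exponential with mean `λ`, for any
threshold `Γ ≥ σ² + Pmax t_A`,
`Pr(P_A t_A + T + σ² < Γ) = 1 - (λ e^{-(Γ-σ²)/λ}/((Pmax-Pmin) t_A)) (e^{Pmax t_A/λ} - e^{Pmin t_A/λ})`. -/
theorem stmt_6
    {Ω : Type*} [MeasurableSpace Ω] (ℙ : Measure Ω) [IsProbabilityMeasure ℙ]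
    (Pmin Pmax l tA σ2 Γ : ℝ)
    (hPmin : 0 ≤ Pmin) (hPP : Pmin < Pmax) (hl : 0 < l) (htA : 0 < tA) (hσ2 : 0 ≤ σ2)
    (PA T : Ω → ℝ) (hPAmeas : Measurable PA) (hTmeas : Measurable T)
    (hPAlaw : Measure.map PA ℙ =
      (ENNReal.ofReal (Pmax - Pmin))⁻¹ • volume.restrict (Set.Icc Pmin Pmax))
    (hTlaw : Measure.map T ℙ =
      volume.withDensity
        (fun t => ENNReal.ofReal (if 0 ≤ t then (1 / l) * Real.exp (-t / l) else 0)))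
    (hindep : ProbabilityTheory.IndepFun PA T ℙ)
    (hΓ : σ2 + Pmax * tA ≤ Γ) :
    (ℙ {ω | PA ω * tA + T ω + σ2 < Γ}).toReal
      = 1 - (l * Real.exp (-(Γ - σ2) / l)) / ((Pmax - Pmin) * tA)
          * (Real.exp (Pmax * tA / l) - Real.exp (Pmin * tA / l)) :=
  stmt_6_general ℙ Pmin Pmax l tA σ2 Γ hPP hl htA PA T hPAmeas hTmeas hPAlaw hTlaw hindep hΓ
end

section
/- Let $\lambda_w > 0$, $\lambda_A > 0$ and $P_{\max} > P_{\min} > 0$ be real numbers, and set $\pi = P_{\max}/P_{\min}$ and $\tau = P_{\max}\lambda_A/\lambda_w$. Then $\int_0^{\infty} \left[ 1 + \frac{\lambda_w\left(e^{-P_{\max} t/\lambda_w} - 1\right)}{(P_{\max}-P_{\min})\,t} + \frac{P_{\min}}{P_{\max}-P_{\min}}\, e^{-P_{\max} t/\lambda_w} \right] \frac{1}{\lambda_A} e^{-t/\lambda_A}\, dt = 1 - \frac{\pi}{\pi - 1}\cdot\frac{\ln(\tau+1)}{\tau} + \frac{1}{\pi - 1}\cdot\frac{1}{\tau + 1}$.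 -/
/-!
Writing `b = 1/λ_A` and `c = P_max/λ_w + 1/λ_A`, the integrand multiplies out to a linear
combination of `e^{-bt}`, `e^{-ct}` and the Frullani quotient `(e^{-bt} - e^{-ct})/t`.
The exponentials integrate to `1/b` and `1/c`, and Frullani's integral gives
`log (c/b) = log (τ + 1)`; the closed form is then algebra in `π` and `τ`.
-/

open MeasureTheory Real Set

lemma integral_exp_neg_mul_Ioi_zero {s : ℝ} (hs : 0 < s) :
    ∫ t in Ioi 0, exp (-(s * t)) = s⁻¹ := by
  have h := integral_exp_mul_Ioi (neg_lt_zero.2 hs) 0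
  rw [mul_zero, exp_zero, neg_div_neg_eq, one_div] at h
  simpa only [neg_mul] using h

lemma exp_neg_mul_sub_exp_neg_mul_le (a b t : ℝ) :
    exp (-(a * t)) - exp (-(b * t)) ≤ (b - a) * t * exp (-(a * t)) := by
  have h := add_one_le_exp (-((b - a) * t))
  have e : exp (-(b * t)) = exp (-(a * t)) * exp (-((b - a) * t)) := by
    rw [← exp_add]; ring_nf
  rw [e]
  nlinarith [exp_pos (-(a * t))]

lemma integrableOn_inv_mul_exp_neg_mul_sub_Ioi {a b : ℝ} (ha : 0 < a) (hb : 0 < b) :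
    IntegrableOn (fun t => t⁻¹ * (exp (-(a * t)) - exp (-(b * t)))) (Ioi 0) := by
  wlog hab : a ≤ b generalizing a b
  · refine (this hb ha (le_of_not_ge hab)).neg.congr_fun (fun t _ => ?_) measurableSet_Ioi
    simp only [Pi.neg_apply]; ring
  refine Integrable.mono' ((exp_neg_integrableOn_Ioi 0 ha).const_mul (b - a)) ?_ ?_
  · exact (continuousOn_inv₀.mono fun t ht => ne_of_gt ht).mul (by fun_prop)
      |>.aestronglyMeasurable measurableSet_Ioi
  · filter_upwards [ae_restrict_mem measurableSet_Ioi] with t ht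
    have ht : 0 < t := ht
    have hnn : 0 ≤ exp (-(a * t)) - exp (-(b * t)) := by
      rw [sub_nonneg, exp_le_exp, neg_le_neg_iff]
      exact mul_le_mul_of_nonneg_right hab ht.le
    rw [Real.norm_of_nonneg (by positivity), neg_mul, inv_mul_le_iff₀ ht]
    linarith [exp_neg_mul_sub_exp_neg_mul_le a b t]

lemma integral_inv_mul_exp_neg_mul_sub_Ioi {a b : ℝ} (ha : 0 < a) (hb : 0 < b) :
    ∫ t in Ioi 0, t⁻¹ * (exp (-(a * t)) - exp (-(b * t))) = log (b / a) := by
  have hcont : Continuous fun x : ℝ => exp (-x) := by fun_prop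
  have h := Frullani.integral_Ioi_eq (L := 1) (R := 0)
    (hcont.locallyIntegrable.locallyIntegrableOn _) ha hb
    ?_ tendsto_exp_neg_atTop_nhds_zero (integrableOn_inv_mul_exp_neg_mul_sub_Ioi ha hb)
  · simpa using h
  · simpa using (hcont.tendsto 0).mono_left nhdsWithin_le_nhds

lemma integral_exp_neg_frullani_combination_Ioi {b c : ℝ} (hb : 0 < b) (hc : 0 < c)
    (α β γ : ℝ) :
    ∫ t in Ioi 0, (α * exp (-(b * t)) - β * (t⁻¹ * (exp (-(b * t)) - exp (-(c * t))))
        + γ * exp (-(c * t)))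
      = α * b⁻¹ - β * log (c / b) + γ * c⁻¹ := by
  have hexp {s : ℝ} (hs : 0 < s) : IntegrableOn (fun t => exp (-(s * t))) (Ioi 0) := by
    simpa only [neg_mul] using exp_neg_integrableOn_Ioi 0 hs
  have hb' := (hexp hb).const_mul α
  have hfr := (integrableOn_inv_mul_exp_neg_mul_sub_Ioi hb hc).const_mul β
  have hdiff : IntegrableOn
      (fun t => α * exp (-(b * t)) - β * (t⁻¹ * (exp (-(b * t)) - exp (-(c * t))))) (Ioi 0) :=
    hb'.sub hfr
  rw [integral_add hdiff ((hexp hc).const_mul γ), integral_sub hb' hfr,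
    integral_const_mul, integral_const_mul, integral_const_mul,
    integral_exp_neg_mul_Ioi_zero hb, integral_exp_neg_mul_Ioi_zero hc,
    integral_inv_mul_exp_neg_mul_sub_Ioi hb hc]

/-- Closed form of the average minimum detection error probability (paper
eq. (39)-(41)): averaging the conditional minimum DEP against the exponential
density of the channel gain gives `1 - (π/(π-1))·ln(τ+1)/τ + (1/(π-1))·1/(τ+1)`
with `π = Pmax/Pmin` and `τ = Pmax λ_A / λ_w`. -/
theorem stmt_8
    (lw lA Pmin Pmax : ℝ) (hlw : 0 < lw) (hlA : 0 < lA)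
    (hPmin : 0 < Pmin) (hPP : Pmin < Pmax)
    (pi tau : ℝ) (hpi : pi = Pmax / Pmin) (htau : tau = Pmax * lA / lw) :
    ∫ t in Set.Ioi (0 : ℝ),
        (1 + lw * (Real.exp (-(Pmax * t) / lw) - 1) / ((Pmax - Pmin) * t)
            + Pmin / (Pmax - Pmin) * Real.exp (-(Pmax * t) / lw))
          * ((1 / lA) * Real.exp (-t / lA))
      = 1 - pi / (pi - 1) * (Real.log (tau + 1) / tau)
          + 1 / (pi - 1) * (1 / (tau + 1)) := by
  have hΔ : 0 < Pmax - Pmin := sub_pos.mpr hPP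
  have hPmax : 0 < Pmax := hPmin.trans hPP
  have hintegrand : ∀ t ∈ Ioi (0 : ℝ),
      (1 + lw * (exp (-(Pmax * t) / lw) - 1) / ((Pmax - Pmin) * t)
          + Pmin / (Pmax - Pmin) * exp (-(Pmax * t) / lw)) * ((1 / lA) * exp (-t / lA))
        = lA⁻¹ * exp (-(lA⁻¹ * t))
          - lw / ((Pmax - Pmin) * lA)
            * (t⁻¹ * (exp (-(lA⁻¹ * t)) - exp (-((Pmax / lw + lA⁻¹) * t))))
          + Pmin / ((Pmax - Pmin) * lA) * exp (-((Pmax / lw + lA⁻¹) * t)) := by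
    intro t ht
    have hsum :
        exp (-((Pmax / lw + lA⁻¹) * t)) = exp (-(Pmax * t) / lw) * exp (-(lA⁻¹ * t)) := by
      rw [← exp_add]; ring_nf
    rw [hsum, show -t / lA = -(lA⁻¹ * t) by ring]
    field_simp [ne_of_gt (show 0 < t from ht)]
    ring
  have hlog : (Pmax / lw + lA⁻¹) / lA⁻¹ = tau + 1 := by
    rw [htau]; field_simp
  rw [setIntegral_congr_fun measurableSet_Ioi hintegrand,
    integral_exp_neg_frullani_combination_Ioi (by positivity) (by positivity), hlog, hpi, htau]
  field_simp
end

section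
/- For every real number $\tau > 0$ and every real number $\pi \ge 2$, the strict inequality $\tau + \left(1 + \frac{1}{\pi}\right)\tau^2 < (1+\tau)^2 \ln(1+\tau)$ holds. -/
/-!
Put `x = 1 + τ`. The function `g x = x² log x - (x - 1) - 3/2 (x - 1)²` vanishes at `x = 1` and
has derivative `g' x = 2 (x log x - x + 1)`, which is positive for `x > 1` because
`log x > 1 - 1/x` there. Hence `g > 0` on `(1, ∞)`, i.e. `τ + 3/2 τ² < (1 + τ)² log (1 + τ)`,
and `1 + 1/π ≤ 3/2` for `π ≥ 2`.
-/

open Real Set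

theorem Real.one_sub_inv_lt_log {x : ℝ} (hx : 0 < x) (hx1 : x ≠ 1) : 1 - x⁻¹ < log x := by
  have h := log_lt_sub_one_of_pos (inv_pos.mpr hx) (inv_ne_one.mpr hx1)
  rw [log_inv] at h
  linarith

theorem Real.sub_one_add_three_halves_mul_sq_lt_sq_mul_log {x : ℝ} (hx : 1 < x) :
    (x - 1) + 3 / 2 * (x - 1) ^ 2 < x ^ 2 * log x := by
  let g : ℝ → ℝ := fun x ↦ x ^ 2 * log x - (x - 1) - 3 / 2 * (x - 1) ^ 2
  have hg' : ∀ y ∈ Ioi (1 : ℝ), HasDerivAt g (2 * (y * log y - y + 1)) y := by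
    intro y hy
    have hy0 : y ≠ 0 := (zero_lt_one.trans hy).ne'
    have h := (((hasDerivAt_pow 2 y).mul (hasDerivAt_log hy0)).sub
      ((hasDerivAt_id y).sub_const 1)).sub ((((hasDerivAt_id y).sub_const 1).pow 2).const_mul
        (3 / 2))
    refine h.congr_deriv ?_
    simp only [id]
    field_simp
    ring
  have hg'_pos : ∀ y ∈ Ioi (1 : ℝ), 0 < 2 * (y * log y - y + 1) := by
    intro y (hy : 1 < y)
    have hy0 : 0 < y := zero_lt_one.trans hy
    have := mul_lt_mul_of_pos_left (one_sub_inv_lt_log hy0 hy.ne') hy0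
    rw [mul_sub, mul_one, mul_inv_cancel₀ hy0.ne'] at this
    linarith
  have hg_cont : ContinuousOn g (Ici 1) := by
    refine ContinuousOn.sub (ContinuousOn.sub ?_ (by fun_prop)) (by fun_prop)
    exact (continuousOn_pow 2).mul
      (continuousOn_log.mono fun y (hy : 1 ≤ y) ↦ (zero_lt_one.trans_le hy).ne')
  have hg_mono : StrictMonoOn g (Ici 1) :=
    strictMonoOn_of_hasDerivWithinAt_pos (convex_Ici 1) hg_cont
      (fun y hy ↦ (hg' y (by simpa using hy)).hasDerivWithinAt)
      (fun y hy ↦ hg'_pos y (by simpa using hy))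
  have := hg_mono self_mem_Ici hx.le hx
  simp only [g, log_one] at this
  linarith

theorem Real.add_mul_sq_lt_one_add_sq_mul_log {c t : ℝ} (hc : c ≤ 3 / 2) (ht : 0 < t) :
    t + c * t ^ 2 < (1 + t) ^ 2 * log (1 + t) := by
  have h := sub_one_add_three_halves_mul_sq_lt_sq_mul_log (lt_add_of_pos_right 1 ht)
  rw [add_sub_cancel_left] at h
  nlinarith [sq_nonneg t]

/-- The key inequality behind the positivity of the derivative of the average
minimum detection error probability (paper eq. (42)): for `τ > 0` and
`π ≥ 2`, one has `τ + (1 + 1/π)τ² < (1+τ)² ln(1+τ)`. -/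
theorem stmt_10 (pi tau : ℝ) (hpi : 2 ≤ pi) (htau : 0 < tau) :
    tau + (1 + 1 / pi) * tau ^ 2 < (1 + tau) ^ 2 * Real.log (1 + tau) := by
  have hinv : 1 / pi ≤ 1 / 2 := one_div_le_one_div_of_le two_pos hpi
  exact Real.add_mul_sq_lt_one_add_sq_mul_log (by linarith) htau
end

section
/- Let $\pi \ge 2$ be a real number and define $\bar{\xi}^*(\tau) = 1 - \left(\frac{\pi}{\pi-1}\cdot\frac{\ln(\tau+1)}{\tau} - \frac{1}{\pi-1}\cdot\frac{1}{\tau+1}\right)$ for $\tau > 0$. Then $\bar{\xi}^*$ is strictly increasing on $(0, \infty)$. -/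
/-!
The derivative of `ξ̄*` at `τ > 0` has the sign of `π (τ + 1) ((τ + 1) log (τ + 1) - τ) - τ²`.
The classical bound `log (1 + τ) > 2τ / (τ + 2)` gives `(τ + 1) log (τ + 1) - τ > τ² / (τ + 2) > 0`,
so for `π ≥ 2` this is more than `2 (τ + 1) τ² / (τ + 2) - τ² = τ³ / (τ + 2) > 0`.
-/

open Real

noncomputable def avgMinDetectionError (p τ : ℝ) : ℝ :=
  1 - (p / (p - 1) * (log (τ + 1) / τ) - 1 / (p - 1) * (1 / (τ + 1)))

lemma sq_div_add_two_lt_mul_log_add_one_sub {t : ℝ} (ht : 0 < t) :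
    t ^ 2 / (t + 2) < (t + 1) * log (t + 1) - t := by
  have hlog : 2 * t / (t + 2) < log (t + 1) := by
    simpa only [add_comm 1 t] using lt_log_one_add_of_pos ht
  have hrewrite : t ^ 2 / (t + 2) = (t + 1) * (2 * t / (t + 2)) - t := by
    field_simp
    ring
  rw [hrewrite]
  gcongr

lemma sq_lt_mul_mul_log_add_one_sub {p t : ℝ} (hp : 2 ≤ p) (ht : 0 < t) :
    t ^ 2 < p * (t + 1) * ((t + 1) * log (t + 1) - t) := by
  have hbound := sq_div_add_two_lt_mul_log_add_one_sub ht
  have hpos : 0 < (t + 1) * log (t + 1) - t := lt_trans (by positivity) hbound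
  calc t ^ 2 < 2 * (t + 1) * (t ^ 2 / (t + 2)) := by
        rw [mul_div_assoc', lt_div_iff₀ (by positivity)]
        nlinarith [pow_pos ht 3]
    _ ≤ 2 * (t + 1) * ((t + 1) * log (t + 1) - t) := by gcongr
    _ ≤ p * (t + 1) * ((t + 1) * log (t + 1) - t) := by gcongr

lemma hasDerivAt_avgMinDetectionError {p t : ℝ} (hp : p ≠ 1) (ht : 0 < t) :
    HasDerivAt (avgMinDetectionError p)
      ((p * (t + 1) * ((t + 1) * log (t + 1) - t) - t ^ 2) / ((p - 1) * t ^ 2 * (t + 1) ^ 2))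
      t := by
  have ht1 : t + 1 ≠ 0 := by positivity
  have hlog : HasDerivAt (fun s => log (s + 1)) (1 / (t + 1)) t :=
    ((hasDerivAt_id t).add_const 1).log ht1
  have hquot := hlog.div (hasDerivAt_id' t) ht.ne'
  have hrecip := (hasDerivAt_const t (1 : ℝ)).div ((hasDerivAt_id' t).add_const 1) ht1
  have hp1 : p - 1 ≠ 0 := sub_ne_zero.mpr hp
  refine (((hquot.const_mul (p / (p - 1))).sub
    (hrecip.const_mul (1 / (p - 1)))).const_sub 1).congr_deriv ?_
  field_simp
  ring

/-- The average minimum detection error probability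
`ξ̄*(τ) = 1 - (π/(π-1)·ln(τ+1)/τ - 1/(π-1)·1/(τ+1))` is strictly increasing
on `(0, ∞)` when `π ≥ 2`. -/
theorem stmt_11 (pi : ℝ) (hpi : 2 ≤ pi) :
    StrictMonoOn
      (fun tau : ℝ =>
        1 - (pi / (pi - 1) * (Real.log (tau + 1) / tau)
              - 1 / (pi - 1) * (1 / (tau + 1))))
      (Set.Ioi 0) := by
  change StrictMonoOn (avgMinDetectionError pi) (Set.Ioi 0)
  have hpi1 : 1 < pi := by linarith
  have hderiv (t : ℝ) (ht : t ∈ Set.Ioi 0) := hasDerivAt_avgMinDetectionError hpi1.ne' ht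
  refine strictMonoOn_of_deriv_pos (convex_Ioi 0)
    (fun t ht => (hderiv t ht).continuousAt.continuousWithinAt) fun t ht => ?_
  rw [interior_Ioi, Set.mem_Ioi] at ht
  rw [(hderiv t ht).deriv]
  exact div_pos (sub_pos.mpr (sq_lt_mul_mul_log_add_one_sub hpi ht)) (by positivity)
end

section
/- Let $\pi \ge 2$ be a real number, define $f(\tau) = \frac{\pi}{\pi-1}\cdot\frac{\ln(\tau+1)}{\tau} - \frac{1}{\pi-1}\cdot\frac{1}{\tau+1}$ for $\tau > 0$, and let $\epsilon \in (0,1)$. Then there exists a unique $\tau_\epsilon > 0$ with $f(\tau_\epsilon) = \epsilon$, and for every $\tau > 0$ one has $f(\tau) \le \epsilon$ if and only if $\tau \ge \tau_\epsilon$. -/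
/-!
`f` is continuous on `(0, ∞)` and tends to `1` at `0⁺` and to `0` at `∞`, so it takes the value
`ε` somewhere; being strictly decreasing, it does so exactly once, and `f τ ≤ ε` exactly from there
on. For `π ≥ 2` the sign of `f'` reduces to `2 (1 + x)² log (1 + x) > 2x + 3x²`, which follows from
`log (1 + x) ≥ 2x / (x + 2)`: the first term of the series of `log ((1 + t) / (1 - t))` at
`t = x / (x + 2)`.
-/

open Real Set Filter Topology

theorem Real.two_mul_div_add_two_le_log_add_one {x : ℝ} (hx : 0 < x) :
    2 * x / (x + 2) ≤ log (x + 1) := by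
  have hsum := hasSum_log_one_add_inv (inv_pos.mpr hx)
  rw [inv_inv] at hsum
  calc 2 * x / (x + 2)
        = 2 * (1 / (2 * ((0 : ℕ) : ℝ) + 1)) * (1 / (2 * x⁻¹ + 1)) ^ (2 * 0 + 1) := by
        rw [show 2 * x⁻¹ + 1 = (x + 2) / x by field_simp; ring]
        norm_num
        ring
    _ ≤ log (1 + x) := le_hasSum hsum 0 fun k _ => by positivity
    _ = log (x + 1) := by rw [add_comm]

theorem Real.two_mul_add_three_mul_sq_lt_two_mul_add_one_sq_mul_log {x : ℝ} (hx : 0 < x) :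
    2 * x + 3 * x ^ 2 < 2 * (x + 1) ^ 2 * log (x + 1) :=
  calc 2 * x + 3 * x ^ 2 < 2 * (x + 1) ^ 2 * (2 * x / (x + 2)) := by
        rw [mul_div_assoc', lt_div_iff₀ (by positivity)]
        nlinarith [pow_pos hx 3]
    _ ≤ 2 * (x + 1) ^ 2 * log (x + 1) := by
        gcongr
        exact two_mul_div_add_two_le_log_add_one hx

theorem ContinuousOn.exists_eq_of_tendsto_nhdsGT_of_tendsto_atTop {f : ℝ → ℝ} {a l m y : ℝ}
    (hf : ContinuousOn f (Ioi a)) (hl : Tendsto f (𝓝[>] a) (𝓝 l))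
    (hm : Tendsto f atTop (𝓝 m)) (hmy : m < y) (hyl : y < l) : ∃ t, a < t ∧ f t = y := by
  obtain ⟨s, hys, has⟩ := ((hl.eventually (lt_mem_nhds hyl)).and self_mem_nhdsWithin).exists
  obtain ⟨T, hTy, hsT⟩ := ((hm.eventually (gt_mem_nhds hmy)).and (eventually_ge_atTop s)).exists
  obtain ⟨t, ht, rfl⟩ := intermediate_value_Icc' hsT
    (hf.mono fun x hx => lt_of_lt_of_le has hx.1) ⟨hTy.le, hys.le⟩
  exact ⟨t, lt_of_lt_of_le has ht.1, rfl⟩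

/-- The paper's `f` with `p = π`; the average minimum detection error probability is `1 - f τ`. -/
noncomputable def covertnessFn (p τ : ℝ) : ℝ :=
  p / (p - 1) * (log (τ + 1) / τ) - 1 / (p - 1) * (1 / (τ + 1))

namespace covertnessFn

variable {p x : ℝ}

theorem hasDerivAt (hp : p ≠ 1) (hx : 0 < x) :
    HasDerivAt (covertnessFn p)
      ((p * (x * (x + 1) - (x + 1) ^ 2 * log (x + 1)) + x ^ 2) / ((p - 1) * x ^ 2 * (x + 1) ^ 2))
      x := by
  have hx1 : x + 1 ≠ 0 := by positivity
  have hp1 : p - 1 ≠ 0 := sub_ne_zero.mpr hp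
  have hshift : HasDerivAt (fun y => y + 1) 1 x := (hasDerivAt_id' x).add_const 1
  refine ((((hshift.log hx1).fun_div (hasDerivAt_id' x) hx.ne').const_mul (p / (p - 1))).sub
    (((hasDerivAt_const x (1 : ℝ)).fun_div hshift hx1).const_mul (1 / (p - 1)))).congr_deriv ?_
  field_simp
  ring

theorem deriv_numerator_neg (hp : 2 ≤ p) (hx : 0 < x) :
    p * (x * (x + 1) - (x + 1) ^ 2 * log (x + 1)) + x ^ 2 < 0 := by
  have key := two_mul_add_three_mul_sq_lt_two_mul_add_one_sq_mul_log hx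
  nlinarith

theorem continuousOn (hp : p ≠ 1) : ContinuousOn (covertnessFn p) (Ioi 0) :=
  fun _ hx => (hasDerivAt hp hx).continuousAt.continuousWithinAt

theorem strictAntiOn (hp : 2 ≤ p) : StrictAntiOn (covertnessFn p) (Ioi 0) := by
  have hp1 : 0 < p - 1 := by linarith
  refine strictAntiOn_of_deriv_neg (convex_Ioi 0) (continuousOn (by linarith)) fun x hx => ?_
  rw [interior_Ioi, mem_Ioi] at hx
  rw [(hasDerivAt (by linarith) hx).deriv]
  exact div_neg_of_neg_of_pos (deriv_numerator_neg hp hx) (by positivity)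

theorem tendsto_atTop (p : ℝ) : Tendsto (covertnessFn p) atTop (𝓝 0) := by
  have hshift := tendsto_atTop_add_const_right atTop (1 : ℝ) tendsto_id
  have hlog : Tendsto (fun τ => log (τ + 1) / τ) atTop (𝓝 0) := by
    simpa [Function.comp_def] using
      (tendsto_pow_log_div_mul_add_atTop 1 (-1) 1 one_ne_zero).comp hshift
  have hinv : Tendsto (fun τ : ℝ => 1 / (τ + 1)) atTop (𝓝 0) := by
    simpa [Function.comp_def] using tendsto_inv_atTop_zero.comp hshift
  have hlim := (hlog.const_mul (p / (p - 1))).sub (hinv.const_mul (1 / (p - 1)))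
  rwa [mul_zero, mul_zero, sub_zero] at hlim

theorem tendsto_nhdsGT_zero (hp : p ≠ 1) : Tendsto (covertnessFn p) (𝓝[>] 0) (𝓝 1) := by
  have hlog : Tendsto (fun τ => log (τ + 1) / τ) (𝓝[>] 0) (𝓝 1) := by
    simpa [div_eq_inv_mul, add_comm] using (hasDerivAt_log one_ne_zero).tendsto_slope_zero_right
  have hinv : Tendsto (fun τ : ℝ => 1 / (τ + 1)) (𝓝[>] 0) (𝓝 1) := by
    have := (tendsto_const_nhds (x := (1 : ℝ))).div
      ((continuous_add_const (1 : ℝ)).tendsto' 0 1 (zero_add 1)) one_ne_zero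
    rw [div_one] at this
    exact this.mono_left nhdsWithin_le_nhds
  have hlim := (hlog.const_mul (p / (p - 1))).sub (hinv.const_mul (1 / (p - 1)))
  rwa [mul_one, mul_one, ← sub_div, div_self (sub_ne_zero.mpr hp)] at hlim

end covertnessFn

/-- For `π ≥ 2` and `f(τ) = π/(π-1)·ln(τ+1)/τ - 1/(π-1)·1/(τ+1)` and any
covertness level `ε ∈ (0,1)`, there is a unique `τ_ε > 0` with
`f(τ_ε) = ε`, and for every `τ > 0` one has `f(τ) ≤ ε ↔ τ ≥ τ_ε`. -/
theorem stmt_13 (pi ε : ℝ) (hpi : 2 ≤ pi) (hε0 : 0 < ε) (hε1 : ε < 1)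
    (f : ℝ → ℝ)
    (hf : ∀ tau : ℝ, f tau = pi / (pi - 1) * (Real.log (tau + 1) / tau)
        - 1 / (pi - 1) * (1 / (tau + 1))) :
    ∃ tauε : ℝ, 0 < tauε ∧ f tauε = ε ∧
      (∀ tau : ℝ, 0 < tau → (f tau ≤ ε ↔ tauε ≤ tau)) ∧
      (∀ tau' : ℝ, 0 < tau' → f tau' = ε → tau' = tauε) := by
  obtain rfl : f = covertnessFn pi := funext hf
  have hpi1 : pi ≠ 1 := by linarith
  have hanti := covertnessFn.strictAntiOn hpi
  obtain ⟨tauε, htauε, hfε⟩ :=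
    (covertnessFn.continuousOn hpi1).exists_eq_of_tendsto_nhdsGT_of_tendsto_atTop
      (covertnessFn.tendsto_nhdsGT_zero hpi1) (covertnessFn.tendsto_atTop pi) hε0 hε1
  refine ⟨tauε, htauε, hfε, fun tau htau => ?_, fun tau' htau' hfτ' => ?_⟩
  · rw [← hfε]
    exact hanti.le_iff_ge htau htauε
  · exact hanti.injOn htau' htauε (hfτ'.trans hfε.symm)
end
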